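/- For every word w ∈ {a,b}⁺ and every i ≥ 1, the word w^{i+1} belongs to the language generated by the i-displacement context-free grammar G_i with nonterminals S (rank 0) and T (rank i), rules S → ((…(aT ⊙₁ a)…) ⊙₁ a) and symmetric rule with b, T → ((…(aT ⊙₁ 1a)…) ⊙_i 1a), symmetric rule with b, and T → 1^i. In particular for i = 2, the word (aba)³ = abaabaaba is derivable from S. -/

import Mathlib

/-- Words over `Σ₁ = Σ ∪ {1}`: the separator `1` is `none`; the rank of a word
is the number of occurrences of the separator. -/
def rk {α : Type*} (w : List (Option α)) : ℕ := w.countP (·.isNone)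

/-- `icl u j v` is the intercalation `u ⊙_j v`: replace the `j`-th occurrence
(counting from 1) of the separator in `u` by the word `v`. -/
def icl {α : Type*} : List (Option α) → ℕ → List (Option α) → List (Option α)
  | [], _, _ => []
  | none :: t, j, v => if j = 1 then v ++ t else none :: icl t (j - 1) v
  | some a :: t, j, v => some a :: icl t j v

/-- The alphabet `{a, b}`: `a := false`, `b := true`; words over `Σ₁` are lists
of `Option Bool` with the separator `1` rendered as `none`. -/
abbrev W := List (Option Bool)

/-- The value of the right-hand side of the `T`-rule of `G_i` for letter `c`:
`(…(c·T ⊙₁ 1c) …) ⊙_i 1c`, i.e. starting from `c·t` intercalate `1c` at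
positions `1, 2, …, i`. -/
def applyT (c : Bool) (i : ℕ) (t : W) : W :=
  (List.range i).foldl (fun u j => icl u (j + 1) [none, some c]) (some c :: t)

/-- The value of the right-hand side of the `S`-rule of `G_i` for letter `c`:
`(…(c·T ⊙₁ c) …) ⊙₁ c`, i.e. starting from `c·t` intercalate `c` at position `1`,
`i` times. -/
def applyS (c : Bool) (i : ℕ) (t : W) : W :=
  (List.range i).foldl (fun u _ => icl u 1 [some c]) (some c :: t)

/-- Words derivable from the nonterminal `T` of `G_i` (values of ground terms). -/
inductive TDer (i : ℕ) : W → Prop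
  | base : TDer i (List.replicate i (none : Option Bool))
  | step (c : Bool) {t : W} : TDer i t → TDer i (applyT c i t)

/-- Words derivable from the start symbol `S` of `G_i`. -/
inductive SDer (i : ℕ) : W → Prop
  | step (c : Bool) {t : W} : TDer i t → SDer i (applyS c i t)

/-- `w^p`. -/
def wpow (w : List Bool) (p : ℕ) : List Bool := (List.replicate p w).flatten

/-! Write a word of rank `i` as blocks `x₀ 1 x₁ 1 ⋯ 1 xᵢ` with separator-free `xₖ`. The `T`-rule
for the letter `c` prefixes every block by `c`, and the `S`-rule does the same while erasing the
separators. Building `x` letter by letter from `1^i`, the nonterminal `T` derives `x (1 x)^i`, and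
then `S` derives `(c x)^(i+1)`. -/

section Intercalation

variable {α : Type*}

@[simp]
lemma rk_nil : rk ([] : List (Option α)) = 0 := rfl

@[simp]
lemma rk_cons_none (t : List (Option α)) : rk (none :: t) = rk t + 1 := by
  simp [rk]

@[simp]
lemma rk_cons_some (a : α) (t : List (Option α)) : rk (some a :: t) = rk t := by
  simp [rk]

@[simp]
lemma rk_append (s t : List (Option α)) : rk (s ++ t) = rk s + rk t :=
  List.countP_append

@[simp]
lemma rk_map_some (x : List α) : rk (x.map some) = 0 := by
  induction x <;> simp_all

lemma icl_append_none_cons (A B v : List (Option α)) :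
    icl (A ++ none :: B) (rk A + 1) v = A ++ v ++ B := by
  induction A with
  | nil => simp [icl]
  | cons a A ih =>
    cases a with
    | none => simp [icl, ih]
    | some a => simp [icl, ih]

/-- Each step replaces the first separator to the right of the prefix `P`, which then grows
by `v ++ z`; hence the positions advance by `rk v`. -/
lemma foldl_icl_blocks (v : List (Option α)) (zs : List (List (Option α)))
    (hzs : ∀ z ∈ zs, rk z = 0) (P : List (Option α)) :
    (List.range' (rk P) zs.length (rk v)).foldl (fun u j => icl u (j + 1) v)
        (P ++ (zs.map (none :: ·)).flatten) =
      P ++ (zs.map (v ++ ·)).flatten := by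
  induction zs generalizing P with
  | nil => simp
  | cons z zs ih =>
    have hz : rk z = 0 := hzs z List.mem_cons_self
    have step : icl (P ++ none :: (z ++ (zs.map (none :: ·)).flatten)) (rk P + 1) v =
        (P ++ v ++ z) ++ (zs.map (none :: ·)).flatten := by
      rw [icl_append_none_cons]; simp
    have hrk : rk P + rk v = rk (P ++ v ++ z) := by simp [hz]
    simp only [List.length_cons, List.range'_succ, List.foldl_cons, List.map_cons,
      List.flatten_cons, List.cons_append, step, hrk]
    rw [ih (fun z' hz' => hzs z' (List.mem_cons_of_mem z hz'))]
    simp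

end Intercalation

lemma applyT_blocks (c : Bool) (x : W) (xs : List W) (hx : rk x = 0)
    (hxs : ∀ z ∈ xs, rk z = 0) :
    applyT c xs.length (x ++ (xs.map (none :: ·)).flatten) =
      (some c :: x) ++ (xs.map ([none, some c] ++ ·)).flatten := by
  have h := foldl_icl_blocks [none, some c] xs hxs (some c :: x)
  simp only [rk_cons_some, hx, rk_cons_none, rk_nil, zero_add] at h
  simpa [applyT, List.range_eq_range'] using h

lemma applyS_blocks (c : Bool) (x : W) (xs : List W) (hx : rk x = 0)
    (hxs : ∀ z ∈ xs, rk z = 0) :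
    applyS c xs.length (x ++ (xs.map (none :: ·)).flatten) =
      (some c :: x) ++ (xs.map (some c :: ·)).flatten := by
  have h := foldl_icl_blocks [some c] xs hxs (some c :: x)
  -- `applyS` ignores its fold index: it is the fold above with every position equal to `1`.
  have hidx : List.range' 0 xs.length 0 = (List.range xs.length).map (fun _ => 0) := by simp
  simp only [rk_cons_some, hx, rk_nil, hidx, List.foldl_map] at h
  simpa [applyS] using h

lemma TDer_replicate (i : ℕ) (x : List Bool) :
    TDer i (x.map some ++ (List.replicate i (none :: x.map some)).flatten) := by
  induction x with
  | nil => simpa using TDer.base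
  | cons c x ih =>
    have h := applyT_blocks c (x.map some) (List.replicate i (x.map some)) (rk_map_some x)
      (by simp)
    simp only [List.length_replicate, List.map_replicate] at h
    simpa [h] using TDer.step c ih

lemma SDer_replicate (i : ℕ) (c : Bool) (x : List Bool) :
    SDer i (List.replicate (i + 1) (some c :: x.map some)).flatten := by
  have h := applyS_blocks c (x.map some) (List.replicate i (x.map some)) (rk_map_some x)
    (by simp)
  simp only [List.length_replicate, List.map_replicate] at h
  simpa [h, List.replicate_succ] using SDer.step c (TDer_replicate i x)

lemma map_some_wpow (w : List Bool) (p : ℕ) :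
    (wpow w p).map some = (List.replicate p (w.map some)).flatten := by
  simp [wpow, List.map_flatten]

open Bool in
/-- for every `w ∈ {a,b}⁺` and every `i ≥ 1`, the word `w^{i+1}`
belongs to the language of `G_i`; in particular `(aba)³ = abaabaaba` is
derivable from `S` in `G₂` (with `a := false`, `b := true`). -/
theorem pow_mem_Gi :
    (∀ i : ℕ, 1 ≤ i → ∀ w : List Bool, w ≠ [] →
      SDer i ((wpow w (i + 1)).map some)) ∧
    SDer 2 (([false, true, false, false, true, false, false, true, false] :
      List Bool).map some) := by
  have hpow : ∀ i : ℕ, ∀ w : List Bool, w ≠ [] → SDer i ((wpow w (i + 1)).map some) := by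
    rintro i (_ | ⟨c, x⟩) hw
    · exact absurd rfl hw
    · simpa [map_some_wpow] using SDer_replicate i c x
  exact ⟨fun i _ => hpow i, hpow 2 [false, true, false] (by simp)⟩
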